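/- The adjunction between the functor G: Hopf cochain dg-cooperads → (simplicial operads)^op given by arity-wise application of the Sullivan realization functor, and its right adjoint Ω*_♯, is a Quillen adjunction: G carries (acyclic) cofibrations of Hopf cochain dg-cooperads to (acyclic) fibrations of simplicial operads. -/
import Mathlib


/-!
STATEMENT 9: the adjunction between the functor `G` from Hopf cochain
dg-cooperads to the opposite of simplicial operads, given by arity-wise
application of the Sullivan realization functor, and its right adjoint
`Ω*_♯`, is a Quillen adjunction: `G` carries (acyclic) cofibrations of Hopf
cochain dg-cooperads to (acyclic) fibrations of simplicial operads.

The setting is axiomatized: `D` is the model category of commutative cochain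
dg-algebras, `S` that of simplicial sets, `g : D ⥤ Sᵒᵖ` the Sullivan
realization (a left Quillen functor); `H` is the category of Hopf cochain
dg-cooperads, whose (acyclic) cofibrations are arity-wise (acyclic)
cofibrations of commutative cochain dg-algebras; `O` is the category of
simplicial operads, whose fibrations and weak equivalences are arity-wise.
-/

open CategoryTheory

universe u₁ v₁ u₂ v₂ u₃ v₃ u₄ v₄

theorem operadic_Sullivan_realization_isQuillen
    -- base model categories: commutative cochain dg-algebras and simplicial sets
    (D : Type u₁) [Category.{v₁} D] (S : Type u₂) [Category.{v₂} S]
    (WD CofD : MorphismProperty D) (WS FibS : MorphismProperty S)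
    (hWS : WS.RespectsIso) (hFibS : FibS.RespectsIso)
    -- the Sullivan realization functor is a left Quillen functor
    (g : D ⥤ Sᵒᵖ)
    (hg : ∀ ⦃X Y : D⦄ (f : X ⟶ Y), CofD f → FibS ((g.map f).unop))
    (hg' : ∀ ⦃X Y : D⦄ (f : X ⟶ Y), CofD f → WD f →
      FibS ((g.map f).unop) ∧ WS ((g.map f).unop))
    -- Hopf cochain dg-cooperads and simplicial operads, with arity-wise
    -- evaluation functors
    (H : Type u₃) [Category.{v₃} H] (O : Type u₄) [Category.{v₄} O]
    (WH CofH : MorphismProperty H) (WO FibO : MorphismProperty O)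
    (evH : ℕ → (H ⥤ D)) (evO : ℕ → (O ⥤ S))
    -- (acyclic) cofibrations of Hopf cooperads are arity-wise (acyclic)
    -- cofibrations of commutative cochain dg-algebras
    (hCofH : ∀ ⦃X Y : H⦄ (φ : X ⟶ Y), CofH φ → ∀ r, CofD ((evH r).map φ))
    (hACofH : ∀ ⦃X Y : H⦄ (φ : X ⟶ Y), CofH φ → WH φ →
      ∀ r, CofD ((evH r).map φ) ∧ WD ((evH r).map φ))
    -- fibrations and weak equivalences of simplicial operads are arity-wise
    (hFibO : ∀ ⦃X Y : O⦄ (ψ : X ⟶ Y), (∀ r, FibS ((evO r).map ψ)) → FibO ψ)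
    (hWO : ∀ ⦃X Y : O⦄ (ψ : X ⟶ Y), (∀ r, WS ((evO r).map ψ)) → WO ψ)
    -- the operadic realization functor `G`, which is arity-wise the Sullivan
    -- realization
    (G : H ⥤ Oᵒᵖ) (e : ∀ r, G ⋙ (evO r).op ≅ evH r ⋙ g) :
    ∀ ⦃X Y : H⦄ (φ : X ⟶ Y), CofH φ →
      FibO ((G.map φ).unop) ∧ (WH φ → FibO ((G.map φ).unop) ∧ WO ((G.map φ).unop)) := by
  intro X Y φ hφ
  have key : ∀ (P : MorphismProperty S), P.RespectsIso →
      ∀ r, P ((g.map ((evH r).map φ)).unop) → P ((evO r).map ((G.map φ).unop)) := by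
    intro P hP r h
    haveI := hP
    have i : Arrow.mk ((G ⋙ (evO r).op).map φ) ≅ Arrow.mk ((evH r ⋙ g).map φ) :=
      Arrow.isoMk ((e r).app X) ((e r).app Y) ((e r).hom.naturality φ).symm
    show P.op ((G ⋙ (evO r).op).map φ)
    rw [P.op.arrow_mk_iso_iff i]
    exact h
  refine ⟨hFibO _ fun r => key FibS hFibS r (hg _ (hCofH φ hφ r)), fun hW => ?_⟩
  refine ⟨hFibO _ fun r => key FibS hFibS r (hg _ (hCofH φ hφ r)), hWO _ fun r => ?_⟩
  exact key WS hWS r ((hg' _ (hACofH φ hφ hW r).1 (hACofH φ hφ hW r).2).2)
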